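/- Let Ω ⊆ ℝ^q be open, δ ∈ (0,1), and let a_j : Ω → End(ℂ^{M_j}) (j = 1,2) be smooth and admit δ-admissible decompositions ℂ^{M_j} = V_{j,1} ⊕ ⋯ ⊕ V_{j,N_j} on Ω that are orthogonal with respect to the standard Hermitian inner products of ℂ^{M_j}. Then: (i) the pointwise Hermitian adjoints −a_j^⋆ : Ω → End(ℂ^{M_j}) admit δ-admissible decompositions (namely the same orthogonal decompositions, with eigenvalue clusters the complex conjugates, respectively negatives of conjugates, of those of a_j); and (ii) if p ∈ S^μ_{1,δ}(Ω×ℝ^q;(ℂ^{M₁},a₁),(ℂ^{M₂},a₂)), then the pointwise adjoint symbol (y,η) ↦ p(y,η)^⋆ belongs to S^μ_{1,δ}(Ω×ℝ^q;(ℂ^{M₂},−a₂^⋆),(ℂ^{M₁},−a₁^⋆)). -/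

import Mathlib

open Set Metric
noncomputable section

abbrev Vec (q : ℕ) := EuclideanSpace ℝ (Fin q)
abbrev CVec (M : ℕ) := EuclideanSpace ℂ (Fin M)
abbrev Hom' (M₁ M₂ : ℕ) := CVec M₁ →L[ℂ] CVec M₂
abbrev End' (M : ℕ) := Hom' M M

/-- `ϱ^a := exp((log ϱ)·a)`. -/
def rpowEnd {M : ℕ} (ϱ : ℝ) (a : End' M) : End' M :=
  (NormedSpace.expSeries ℂ (End' M)).sum ((Real.log ϱ : ℂ) • a)

/-- `⟨η⟩ = (1+|η|²)^{1/2}`. -/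
def jbr {q : ℕ} (η : Vec q) : ℝ := Real.sqrt (1 + ‖η‖ ^ 2)

/-- Iterated partial derivatives in the second (covariable) slot. -/
def pdSnd {q : ℕ} {F : Type*} [NormedAddCommGroup F] [NormedSpace ℝ F]
    (β : List (Fin q)) (f : Vec q → Vec q → F) : Vec q → Vec q → F :=
  β.foldr (fun i g => fun y η => fderiv ℝ (g y) η (EuclideanSpace.single i (1:ℝ))) f

/-- Iterated partial derivatives in the first (base variable) slot. -/
def pdFst {q : ℕ} {F : Type*} [NormedAddCommGroup F] [NormedSpace ℝ F]
    (α : List (Fin q)) (f : Vec q → Vec q → F) : Vec q → Vec q → F :=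
  α.foldr (fun i g => fun y η => fderiv ℝ (fun y' => g y' η) y (EuclideanSpace.single i (1:ℝ))) f

/-- The twisted symbol class `S^μ_{1,δ}(Ω×ℝ^q;(ℂ^{M₁},a₁),(ℂ^{M₂},a₂))`. -/
def TwistedSymbol {q M₁ M₂ : ℕ} (Ω : Set (Vec q)) (δ μ : ℝ)
    (a₁ : Vec q → End' M₁) (a₂ : Vec q → End' M₂)
    (p : Vec q → Vec q → Hom' M₁ M₂) : Prop :=
  ContDiffOn ℝ (⊤ : ℕ∞) (fun z : Vec q × Vec q => p z.1 z.2) (Ω ×ˢ (univ : Set (Vec q))) ∧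
  ∀ K : Set (Vec q), K ⊆ Ω → IsCompact K → ∀ α β : List (Fin q),
    ∃ C > 0, ∀ y ∈ K, ∀ η : Vec q,
      ‖(rpowEnd (jbr η) (a₂ y)).comp
          ((pdFst α (pdSnd β p) y η).comp (rpowEnd (jbr η) (-(a₁ y))))‖
        ≤ C * jbr η ^ (μ - (β.length : ℝ) + δ * (α.length : ℝ))

/-- Spectrum of the restriction of `f` to an invariant subspace `V`. -/
def specRes {M : ℕ} (f : End' M) (V : Submodule ℂ (CVec M))
    (h : ∀ x ∈ V, f x ∈ V) : Set ℂ :=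
  spectrum ℂ ((f : CVec M →ₗ[ℂ] CVec M).restrict h)

/-- `a` admits a `δ`-admissible decomposition on `Ω`. -/
def AdmissibleDecomp {q M : ℕ} (Ω : Set (Vec q)) (δ : ℝ)
    (a : Vec q → End' M) : Prop :=
  ∃ (N : ℕ) (V : Fin N → Submodule ℂ (CVec M)),
    DirectSum.IsInternal V ∧
    ∃ hinv : ∀ k, ∀ y ∈ Ω, ∀ x ∈ V k, a y x ∈ V k,
      (∀ k, Metric.diam
          (closure (⋃ y, ⋃ hy : y ∈ Ω, specRes (a y) (V k) (hinv k y hy))) < δ) ∧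
      Pairwise (fun k l => Disjoint
          (closure (⋃ y, ⋃ hy : y ∈ Ω, specRes (a y) (V k) (hinv k y hy)))
          (closure (⋃ y, ⋃ hy : y ∈ Ω, specRes (a y) (V l) (hinv l y hy))))

/-- A `δ`-admissible decomposition whose summands are pairwise orthogonal with respect
to the standard Hermitian inner product of `ℂ^M`. -/
def OrthAdmissibleDecomp {q M : ℕ} (Ω : Set (Vec q)) (δ : ℝ)
    (a : Vec q → End' M) : Prop :=
  ∃ (N : ℕ) (V : Fin N → Submodule ℂ (CVec M)),
    DirectSum.IsInternal V ∧
    (Pairwise fun k l => V k ≤ (V l)ᗮ) ∧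
    ∃ hinv : ∀ k, ∀ y ∈ Ω, ∀ x ∈ V k, a y x ∈ V k,
      (∀ k, Metric.diam
          (closure (⋃ y, ⋃ hy : y ∈ Ω, specRes (a y) (V k) (hinv k y hy))) < δ) ∧
      Pairwise (fun k l => Disjoint
          (closure (⋃ y, ⋃ hy : y ∈ Ω, specRes (a y) (V k) (hinv k y hy)))
          (closure (⋃ y, ⋃ hy : y ∈ Ω, specRes (a y) (V l) (hinv l y hy))))

lemma spectrum_neg_mem_iff {A : Type*} [Ring A] [Algebra ℂ A] (a : A) (z : ℂ) :
    z ∈ spectrum ℂ (-a) ↔ -z ∈ spectrum ℂ a := by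
  rw [spectrum.mem_iff, spectrum.mem_iff, not_iff_not, ← IsUnit.neg_iff]
  congr! 1
  rw [map_neg]
  abel


lemma spectrum_star_mem_iff {A : Type*} [Ring A] [Algebra ℂ A] [StarRing A] [StarModule ℂ A]
    (a : A) (z : ℂ) :
    z ∈ spectrum ℂ (star a) ↔ (starRingEnd ℂ) z ∈ spectrum ℂ a := by
  rw [spectrum.mem_iff, spectrum.mem_iff, not_iff_not,
    ← isUnit_star (a := algebraMap ℂ A ((starRingEnd ℂ) z) - a)]
  congr! 1
  rw [star_sub, ← algebraMap_star_comm]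
  simp [Complex.star_def]


/-- The map `z ↦ -conj z` as an isometry equivalence of `ℂ`. -/

def negConj : ℂ ≃ᵢ ℂ where
  toFun z := -(starRingEnd ℂ z)
  invFun z := -(starRingEnd ℂ z)
  left_inv z := by simp
  right_inv z := by simp
  isometry_toFun := by
    refine Isometry.of_dist_eq fun a b => ?_
    rw [Complex.dist_eq, Complex.dist_eq]
    have : -(starRingEnd ℂ a) - -(starRingEnd ℂ b) = (starRingEnd ℂ) (b - a) := by
      rw [map_sub]; ring
    rw [this, Complex.norm_conj, norm_sub_rev]


lemma negConj_apply (z : ℂ) : negConj z = -(starRingEnd ℂ z) := rfl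


/-- Spectrum of the restriction of `f` to an invariant subspace `V`. -/

lemma restrict_adjoint_eq {E : Type*} [NormedAddCommGroup E] [InnerProductSpace ℂ E]
    [FiniteDimensional ℂ E] [CompleteSpace E] (f : E →L[ℂ] E) (V : Submodule ℂ E)
    (h : ∀ x ∈ V, f x ∈ V) (h' : ∀ x ∈ V, (ContinuousLinearMap.adjoint f) x ∈ V) :
    ((ContinuousLinearMap.adjoint f : E →L[ℂ] E) : E →ₗ[ℂ] E).restrict h'
      = LinearMap.adjoint ((f : E →ₗ[ℂ] E).restrict h) := by
  rw [LinearMap.eq_adjoint_iff]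
  intro x y
  rw [Submodule.coe_inner, Submodule.coe_inner]
  simp only [LinearMap.restrict_apply, ContinuousLinearMap.coe_coe]
  exact ContinuousLinearMap.adjoint_inner_left f (y : E) (x : E)


lemma spectrum_restrict_neg_adjoint {E : Type*} [NormedAddCommGroup E] [InnerProductSpace ℂ E]
    [FiniteDimensional ℂ E] [CompleteSpace E] (f : E →L[ℂ] E) (V : Submodule ℂ E)
    (h : ∀ x ∈ V, f x ∈ V) (h' : ∀ x ∈ V, (-(ContinuousLinearMap.adjoint f)) x ∈ V) :
    spectrum ℂ (((-(ContinuousLinearMap.adjoint f) : E →L[ℂ] E) : E →ₗ[ℂ] E).restrict h')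
      = negConj '' spectrum ℂ ((f : E →ₗ[ℂ] E).restrict h) := by
  have h'' : ∀ x ∈ V, (ContinuousLinearMap.adjoint f) x ∈ V := fun x hx => by
    have := h' x hx
    rw [ContinuousLinearMap.neg_apply] at this
    simpa using V.neg_mem this
  have hres : ((-(ContinuousLinearMap.adjoint f) : E →L[ℂ] E) : E →ₗ[ℂ] E).restrict h'
      = -(((ContinuousLinearMap.adjoint f : E →L[ℂ] E) : E →ₗ[ℂ] E).restrict h'') := by
    ext x
    simp [LinearMap.restrict_apply]
  ext z
  rw [Set.mem_image]
  rw [hres, restrict_adjoint_eq f V h h'', ← LinearMap.star_eq_adjoint]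
  rw [spectrum_neg_mem_iff (star ((f : E →ₗ[ℂ] E).restrict h)) z,
    spectrum_star_mem_iff ((f : E →ₗ[ℂ] E).restrict h) (-z)]
  constructor
  · intro hz
    exact ⟨-(starRingEnd ℂ z), by simpa [map_neg] using hz, by simp [negConj_apply]⟩
  · rintro ⟨w, hw, rfl⟩
    simpa [negConj_apply, map_neg] using hw


lemma specRes_neg_adjoint {M : ℕ} (f : End' M) (V : Submodule ℂ (CVec M))
    (h : ∀ x ∈ V, f x ∈ V) (h' : ∀ x ∈ V, (-(ContinuousLinearMap.adjoint f)) x ∈ V) :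
    specRes (-(ContinuousLinearMap.adjoint f)) V h' = negConj '' specRes f V h :=
  spectrum_restrict_neg_adjoint f V h h'


lemma adjoint_mem_invariant {E : Type*} [NormedAddCommGroup E] [InnerProductSpace ℂ E]
    [FiniteDimensional ℂ E] [CompleteSpace E] {N : ℕ} (V : Fin N → Submodule ℂ E)
    (hint : ⨆ i, V i = ⊤) (horth : Pairwise fun k l => V k ≤ (V l)ᗮ)
    (f : E →L[ℂ] E) (hinv : ∀ k, ∀ x ∈ V k, f x ∈ V k) (k : Fin N) :
    ∀ x ∈ V k, ContinuousLinearMap.adjoint f x ∈ V k := by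
  intro x hx
  set W : Submodule ℂ E := ⨆ l : {l : Fin N // l ≠ k}, V (l : Fin N) with hW
  have hWperp : W ≤ (V k)ᗮ := iSup_le fun l => horth l.2
  have hsup : V k ⊔ W = ⊤ := by
    rw [← top_le_iff, ← hint]
    refine iSup_le fun i => ?_
    by_cases hik : i = k
    · subst hik; exact le_sup_left
    · exact le_trans
        (le_iSup (fun l : {l : Fin N // l ≠ k} => V (l : Fin N)) ⟨i, hik⟩) le_sup_right
  have hperpW : (V k)ᗮ ≤ W := by
    intro v hv
    have hv' : v ∈ V k ⊔ W := by rw [hsup]; trivial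
    obtain ⟨a, ha, b, hb, rfl⟩ := Submodule.mem_sup.mp hv'
    have haperp : a ∈ (V k)ᗮ := by
      have : a = (a + b) - b := by abel
      rw [this]
      exact Submodule.sub_mem _ hv (hWperp hb)
    have ha0 : a = 0 :=
      inner_self_eq_zero.mp ((Submodule.mem_orthogonal _ _).mp haperp a ha)
    simpa [ha0] using hb
  have hfW : ∀ w ∈ W, f w ∈ W := by
    intro w hw
    have hmap : Submodule.map (f : E →ₗ[ℂ] E) W ≤ W := by
      rw [hW, Submodule.map_iSup]
      refine iSup_le fun l => le_trans ?_ (le_iSup _ l)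
      rintro u ⟨v, hv, rfl⟩
      exact hinv l v hv
    exact hmap ⟨w, hw, rfl⟩
  obtain ⟨u, hu, v, hv, huv⟩ :=
    Submodule.exists_add_mem_mem_orthogonal (K := V k) (ContinuousLinearMap.adjoint f x)
  have hv0 : v = 0 := by
    have hvdef : v = ContinuousLinearMap.adjoint f x - u := by rw [huv]; abel
    have h1 : (inner ℂ v v : ℂ)
        = inner ℂ (ContinuousLinearMap.adjoint f x) v - inner ℂ u v := by
      rw [hvdef, inner_sub_left]
    have h2 : (inner ℂ u v : ℂ) = 0 := (Submodule.mem_orthogonal _ _).mp hv u hu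
    have h3 : (inner ℂ (ContinuousLinearMap.adjoint f x) v : ℂ) = inner ℂ x (f v) :=
      ContinuousLinearMap.adjoint_inner_left f v x
    have h4 : (inner ℂ x (f v) : ℂ) = 0 := by
      have hfv : f v ∈ (V k)ᗮ := hWperp (hfW v (hperpW hv))
      exact (Submodule.mem_orthogonal _ _).mp hfv x hx
    have : (inner ℂ v v : ℂ) = 0 := by rw [h1, h2, h3, h4, sub_zero]
    exact inner_self_eq_zero.mp this
  rw [huv, hv0, add_zero]
  exact hu


lemma orth_adm_neg_adjoint {q M : ℕ} (Ω : Set (Vec q)) (δ : ℝ) (a : Vec q → End' M)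
    (h : OrthAdmissibleDecomp Ω δ a) :
    AdmissibleDecomp Ω δ (fun y => -(ContinuousLinearMap.adjoint (a y))) := by
  obtain ⟨N, V, hint, horth, hinv, hdiam, hdisj⟩ := h
  have htop : ⨆ i, V i = ⊤ := hint.submodule_iSup_eq_top
  have hinv' : ∀ k, ∀ y ∈ Ω, ∀ x ∈ V k,
      (fun y => -(ContinuousLinearMap.adjoint (a y))) y x ∈ V k := by
    intro k y hy x hx
    simp only [ContinuousLinearMap.neg_apply]
    exact (V k).neg_mem
      (adjoint_mem_invariant V htop horth (a y) (fun l => hinv l y hy) k x hx)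
  have hsets : ∀ k,
      closure (⋃ y, ⋃ hy : y ∈ Ω,
        specRes ((fun y => -(ContinuousLinearMap.adjoint (a y))) y) (V k) (hinv' k y hy))
      = negConj '' closure (⋃ y, ⋃ hy : y ∈ Ω, specRes (a y) (V k) (hinv k y hy)) := by
    intro k
    have h1 : (⋃ y, ⋃ hy : y ∈ Ω,
        specRes ((fun y => -(ContinuousLinearMap.adjoint (a y))) y) (V k) (hinv' k y hy))
        = negConj '' (⋃ y, ⋃ hy : y ∈ Ω, specRes (a y) (V k) (hinv k y hy)) := by
      rw [Set.image_iUnion]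
      refine Set.iUnion_congr fun y => ?_
      rw [Set.image_iUnion]
      refine Set.iUnion_congr fun hy => ?_
      exact specRes_neg_adjoint (a y) (V k) (hinv k y hy) (hinv' k y hy)
    rw [h1]
    exact (negConj.toHomeomorph.image_closure _).symm
  refine ⟨N, V, hint, hinv', fun k => ?_, fun k l hkl => ?_⟩
  · rw [hsets k, negConj.isometry.diam_image]
    exact hdiam k
  · dsimp only
    rw [hsets k, hsets l]
    exact (Set.disjoint_image_iff negConj.injective).mpr (hdisj hkl)


/-- The pointwise Hermitian adjoint as a continuous `ℝ`-linear equivalence. -/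

def adjCLE (M₁ M₂ : ℕ) : Hom' M₁ M₂ ≃L[ℝ] Hom' M₂ M₁ :=
  letI A := (ContinuousLinearMap.adjoint :
    (CVec M₁ →L[ℂ] CVec M₂) ≃ₗᵢ⋆[ℂ] (CVec M₂ →L[ℂ] CVec M₁))
  { toFun := fun f => A f
    invFun := fun g => ContinuousLinearMap.adjoint g
    map_add' := fun f g => A.map_add f g
    map_smul' := fun r f => by
      have h1 : r • f = ((r : ℂ)) • f := by
        rw [← smul_one_smul ℂ r f, Complex.real_smul, mul_one]
      have h2 : r • (A f) = ((r : ℂ)) • (A f) := by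
        rw [← smul_one_smul ℂ r (A f), Complex.real_smul, mul_one]
      simp only [RingHom.id_apply]
      rw [h1, h2, A.map_smulₛₗ]
      congr 1
      simp [Complex.star_def, Complex.conj_ofReal]
    left_inv := fun f => ContinuousLinearMap.adjoint_adjoint f
    right_inv := fun f => ContinuousLinearMap.adjoint_adjoint f
    continuous_toFun := A.continuous
    continuous_invFun := (ContinuousLinearMap.adjoint :
      (CVec M₂ →L[ℂ] CVec M₁) ≃ₗᵢ⋆[ℂ] (CVec M₁ →L[ℂ] CVec M₂)).continuous }


lemma adjCLE_apply {M₁ M₂ : ℕ} (f : Hom' M₁ M₂) :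
    adjCLE M₁ M₂ f = ContinuousLinearMap.adjoint f := rfl


lemma pdSnd_cons {q : ℕ} {F : Type*} [NormedAddCommGroup F] [NormedSpace ℝ F]
    (i : Fin q) (β : List (Fin q)) (f : Vec q → Vec q → F) :
    pdSnd (i :: β) f
      = fun y η => fderiv ℝ (pdSnd β f y) η (EuclideanSpace.single i (1:ℝ)) := rfl


lemma pdFst_cons {q : ℕ} {F : Type*} [NormedAddCommGroup F] [NormedSpace ℝ F]
    (i : Fin q) (α : List (Fin q)) (f : Vec q → Vec q → F) :
    pdFst (i :: α) f
      = fun y η => fderiv ℝ (fun y' => pdFst α f y' η) y (EuclideanSpace.single i (1:ℝ)) := rfl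


lemma pdSnd_comp_equiv {q : ℕ} {F G : Type*} [NormedAddCommGroup F] [NormedSpace ℝ F]
    [NormedAddCommGroup G] [NormedSpace ℝ G] (e : F ≃L[ℝ] G) (β : List (Fin q))
    (f : Vec q → Vec q → F) :
    pdSnd β (fun y η => e (f y η)) = fun y η => e (pdSnd β f y η) := by
  induction β with
  | nil => rfl
  | cons i β ih =>
    funext y η
    rw [pdSnd_cons, pdSnd_cons, ih]
    dsimp only
    have h : (fun η' => e (pdSnd β f y η')) = (⇑e ∘ (pdSnd β f y)) := rfl
    rw [h, e.comp_fderiv]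
    rfl


lemma pdFst_comp_equiv {q : ℕ} {F G : Type*} [NormedAddCommGroup F] [NormedSpace ℝ F]
    [NormedAddCommGroup G] [NormedSpace ℝ G] (e : F ≃L[ℝ] G) (α : List (Fin q))
    (f : Vec q → Vec q → F) :
    pdFst α (fun y η => e (f y η)) = fun y η => e (pdFst α f y η) := by
  induction α with
  | nil => rfl
  | cons i α ih =>
    funext y η
    rw [pdFst_cons, pdFst_cons, ih]
    dsimp only
    have h : (fun y' => e (pdFst α f y' η)) = (⇑e ∘ (fun y' => pdFst α f y' η)) := rfl
    rw [h, e.comp_fderiv]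
    rfl


lemma adjoint_rpowEnd {M : ℕ} (ϱ : ℝ) (a : End' M) :
    ContinuousLinearMap.adjoint (rpowEnd ϱ a)
      = rpowEnd ϱ (ContinuousLinearMap.adjoint a) := by
  rw [← ContinuousLinearMap.star_eq_adjoint, ← ContinuousLinearMap.star_eq_adjoint]
  unfold rpowEnd
  rw [← NormedSpace.exp_eq_expSeries_sum ℂ, NormedSpace.star_exp, star_smul]
  congr 1
  simp only [Complex.star_def, Complex.conj_ofReal]


set_option maxHeartbeats 1600000 in

lemma twisted_adjoint {q M₁ M₂ : ℕ} (Ω : Set (Vec q)) (δ μ : ℝ)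
    (a₁ : Vec q → End' M₁) (a₂ : Vec q → End' M₂)
    (p : Vec q → Vec q → Hom' M₁ M₂) (hp : TwistedSymbol Ω δ μ a₁ a₂ p) :
    TwistedSymbol Ω δ μ (fun y => -(ContinuousLinearMap.adjoint (a₂ y)))
      (fun y => -(ContinuousLinearMap.adjoint (a₁ y)))
      (fun y η => ContinuousLinearMap.adjoint (p y η)) := by
  obtain ⟨hsm, hest⟩ := hp
  constructor
  · have h : (fun z : Vec q × Vec q => ContinuousLinearMap.adjoint (p z.1 z.2))
        = (⇑(adjCLE M₁ M₂) ∘ fun z : Vec q × Vec q => p z.1 z.2) := rfl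
    rw [h]
    exact ((adjCLE M₁ M₂).toContinuousLinearMap.contDiff).comp_contDiffOn hsm
  · intro K hK hKc α β
    obtain ⟨C, hC, hbound⟩ := hest K hK hKc α β
    refine ⟨C, hC, fun y hy η => ?_⟩
    have hD : pdFst α (pdSnd β (fun y η => ContinuousLinearMap.adjoint (p y η))) y η
        = ContinuousLinearMap.adjoint (pdFst α (pdSnd β p) y η) := by
      have h1 : (fun y η => ContinuousLinearMap.adjoint (p y η))
          = (fun y η => (adjCLE M₁ M₂) (p y η)) := rfl
      rw [h1, pdSnd_comp_equiv, pdFst_comp_equiv]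
      rfl
    have e1 : rpowEnd (jbr η) (-(ContinuousLinearMap.adjoint (a₁ y)))
        = ContinuousLinearMap.adjoint (rpowEnd (jbr η) (-(a₁ y))) := by
      rw [adjoint_rpowEnd]
      congr 1
      rw [← ContinuousLinearMap.star_eq_adjoint, ← ContinuousLinearMap.star_eq_adjoint,
        star_neg]
    have e2 : rpowEnd (jbr η) (ContinuousLinearMap.adjoint (a₂ y))
        = ContinuousLinearMap.adjoint (rpowEnd (jbr η) (a₂ y)) := (adjoint_rpowEnd _ _).symm
    dsimp only
    rw [neg_neg, hD, e1, e2]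
    have hexp : (ContinuousLinearMap.adjoint (rpowEnd (jbr η) (-(a₁ y)))).comp
        ((ContinuousLinearMap.adjoint (pdFst α (pdSnd β p) y η)).comp
          (ContinuousLinearMap.adjoint (rpowEnd (jbr η) (a₂ y))))
        = ContinuousLinearMap.adjoint ((rpowEnd (jbr η) (a₂ y)).comp
            ((pdFst α (pdSnd β p) y η).comp (rpowEnd (jbr η) (-(a₁ y))))) := by
      rw [ContinuousLinearMap.adjoint_comp, ContinuousLinearMap.adjoint_comp,
        ContinuousLinearMap.comp_assoc]
    rw [hexp, LinearIsometryEquiv.norm_map ContinuousLinearMap.adjoint]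
    exact hbound y hy η

/-- the negated Hermitian adjoints `-a_j^⋆` admit `δ`-admissible
decompositions, and the pointwise adjoint of a twisted symbol is a twisted symbol for
the actions generated by `-a₂^⋆` and `-a₁^⋆`. -/
theorem statement18 {q M₁ M₂ : ℕ} (Ω : Set (Vec q)) (hΩ : IsOpen Ω)
    (δ : ℝ) (hδ : δ ∈ Set.Ioo (0:ℝ) 1)
    (a₁ : Vec q → End' M₁) (a₂ : Vec q → End' M₂)
    (ha₁ : ContDiffOn ℝ (⊤ : ℕ∞) a₁ Ω) (ha₂ : ContDiffOn ℝ (⊤ : ℕ∞) a₂ Ω)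
    (h1 : OrthAdmissibleDecomp Ω δ a₁) (h2 : OrthAdmissibleDecomp Ω δ a₂)
    (μ : ℝ) (p : Vec q → Vec q → Hom' M₁ M₂)
    (hp : TwistedSymbol Ω δ μ a₁ a₂ p) :
    AdmissibleDecomp Ω δ (fun y => -(ContinuousLinearMap.adjoint (a₁ y))) ∧
    AdmissibleDecomp Ω δ (fun y => -(ContinuousLinearMap.adjoint (a₂ y))) ∧
    TwistedSymbol Ω δ μ
      (fun y => -(ContinuousLinearMap.adjoint (a₂ y)))
      (fun y => -(ContinuousLinearMap.adjoint (a₁ y)))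
      (fun y η => ContinuousLinearMap.adjoint (p y η)) :=
  ⟨orth_adm_neg_adjoint Ω δ a₁ h1, orth_adm_neg_adjoint Ω δ a₂ h2,
    twisted_adjoint Ω δ μ a₁ a₂ p hp⟩
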